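/- Let A be a real m×n matrix, C a symmetric positive definite n×n real matrix, p > 0 a real number, l, u ∈ ℝ^m with 0 ≤ l ≤ u, and N > 0, and assume the polytope 𝒫 = {x ∈ ℝ^m : l ≤ x ≤ u, Σᵢ xᵢ = N} is nonempty. Let g_F(x) = Tr((C + Aᵀ·diag(x)·A)^{−p}), let Ω* be the set of minimizers of g_F over 𝒫 and g* its minimum value. Then g_F is (M, 1/2)-sharp on 𝒫 for some M > 0: there exists M > 0 such that for every x ∈ 𝒫, M·(g_F(x) − g*)^{1/2} ≥ inf_{y ∈ Ω*} ‖x − y‖₂. -/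

import Mathlib

open Matrix

/-- Largest eigenvalue of a (Hermitian) real matrix. -/
noncomputable def eigMax {n : ℕ} (M : Matrix (Fin n) (Fin n) ℝ) : ℝ :=
  if h : M.IsHermitian then ⨆ i, h.eigenvalues i else 0

/-- Smallest eigenvalue of a (Hermitian) real matrix. -/
noncomputable def eigMin {n : ℕ} (M : Matrix (Fin n) (Fin n) ℝ) : ℝ :=
  if h : M.IsHermitian then ⨅ i, h.eigenvalues i else 0

/-- Spectral norm (largest singular value) of a real matrix. -/
noncomputable def specNorm {m n : ℕ} (A : Matrix (Fin m) (Fin n) ℝ) : ℝ :=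
  Real.sqrt (eigMax (Aᵀ * A))

/-- Real power of a symmetric matrix, via the spectral decomposition:
`M ^ r` has the same eigenvectors as `M` and eigenvalues `λᵢ ^ r`. -/
noncomputable def mpow {n : ℕ} (M : Matrix (Fin n) (Fin n) ℝ) (r : ℝ) :
    Matrix (Fin n) (Fin n) ℝ :=
  if h : M.IsHermitian then
    (h.eigenvectorUnitary : Matrix (Fin n) (Fin n) ℝ) *
      Matrix.diagonal (fun i => h.eigenvalues i ^ r) *
      (star h.eigenvectorUnitary : Matrix (Fin n) (Fin n) ℝ)
  else 0

/-- Frobenius norm of a real matrix. -/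
noncomputable def frobNorm {m n : ℕ} (M : Matrix (Fin m) (Fin n) ℝ) : ℝ :=
  Real.sqrt ((Mᵀ * M).trace)

/-!
For `x ≥ 0` the matrices `S(x) = C + Aᵀ diag(x) A` have their spectra in a fixed interval
`[a, b] ⊂ (0, ∞)`, on which `t ↦ t^{-p}` is strongly convex. By Peierls' inequality,
`X ↦ Tr X^{-p}` is then strongly convex in the Frobenius norm on such matrices, so
`g_F(x) - g* ≥ μ ‖S(x) - S(x*)‖²` for any minimizer `x*`, and the minimizers are exactly the points
of `𝒫` with `S(x) = S(x*)`: a polyhedron. Hoffman's error bound for this polyhedron, relative to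
`𝒫`, gives `dist(x, Ω*) ≤ κ ‖S(x) - S(x*)‖`, and the two estimates combine to the exponent `1/2`.
-/

open RealInnerProductSpace Metric

section Hoffman

variable {E : Type*} [NormedAddCommGroup E] [InnerProductSpace ℝ E] {T : Type*}

def conicCombinations (β : T → E) (s : Finset T) : Set E :=
  {v | ∃ lam : T → ℝ, (∀ t ∈ s, 0 ≤ lam t) ∧ ∑ t ∈ s, lam t • β t = v}

theorem conicCombinations_mono (β : T → E) {J s : Finset T} (hJs : J ⊆ s) :
    conicCombinations β J ⊆ conicCombinations β s := by
  classical
  rintro _ ⟨lam, hlam, rfl⟩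
  refine ⟨fun t => if t ∈ J then lam t else 0, fun t _ => ?_, ?_⟩
  · dsimp only
    split_ifs with ht
    exacts [hlam t ht, le_rfl]
  · simp only [ite_smul, zero_smul]
    rw [← Finset.sum_filter, Finset.filter_mem_eq_inter, Finset.inter_eq_right.mpr hJs]

/-- **Carathéodory's theorem** for cones. -/
theorem exists_linearIndepOn_of_mem_conicCombinations (β : T → E) {s : Finset T} {v : E}
    (hv : v ∈ conicCombinations β s) :
    ∃ J ⊆ s, LinearIndepOn ℝ β (J : Set T) ∧ v ∈ conicCombinations β J := by
  classical
  obtain ⟨lam, hlam, rfl⟩ := hv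
  induction s using Finset.strongInduction generalizing lam with
  | H s ih =>
  by_cases hind : LinearIndepOn ℝ β (s : Set T)
  · exact ⟨s, subset_rfl, hind, lam, hlam, rfl⟩
  obtain ⟨g, hg, hpos⟩ : ∃ g : T → ℝ, ∑ t ∈ s, g t • β t = 0 ∧ ∃ t ∈ s, 0 < g t := by
    obtain ⟨g, hg, t, ht, hgt⟩ := not_linearIndepOn_finset_iff.mp hind
    rcases hgt.lt_or_gt with hneg | hpos
    · exact ⟨-g, by simp [neg_smul, Finset.sum_neg_distrib, hg], t, ht, by simpa⟩
    · exact ⟨g, hg, t, ht, hpos⟩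
  -- Subtracting the largest multiple `r • g` of the relation that keeps `lam` nonnegative
  -- makes the coefficient at `t₀` vanish.
  obtain ⟨t₀, ht₀, hmin⟩ := (s.filter (0 < g ·)).exists_min_image (fun t => lam t / g t)
    (let ⟨t, ht, hgt⟩ := hpos; ⟨t, Finset.mem_filter.mpr ⟨ht, hgt⟩⟩)
  rw [Finset.mem_filter] at ht₀
  set r := lam t₀ / g t₀
  have hr : 0 ≤ r := div_nonneg (hlam t₀ ht₀.1) ht₀.2.le
  have hlam' : ∀ t ∈ s.erase t₀, 0 ≤ lam t - r * g t := by
    intro t ht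
    have hts := Finset.mem_of_mem_erase ht
    rcases le_or_gt (g t) 0 with hgt | hgt
    · nlinarith [hlam t hts]
    · have := hmin t (Finset.mem_filter.mpr ⟨hts, hgt⟩)
      rw [le_div_iff₀ hgt] at this
      linarith
  have hsum : ∑ t ∈ s.erase t₀, (lam t - r * g t) • β t = ∑ t ∈ s, lam t • β t := by
    rw [Finset.sum_erase _ (by simp [r, ht₀.2.ne']), ← sub_zero (∑ t ∈ s, lam t • β t),
      ← smul_zero r, ← hg, Finset.smul_sum, ← Finset.sum_sub_distrib]
    simp only [sub_smul, smul_smul]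
  obtain ⟨J, hJ, hind, hmem⟩ := ih _ (Finset.erase_ssubset ht₀.1) _ hlam'
  exact ⟨J, hJ.trans (Finset.erase_subset _ _), hind, hsum ▸ hmem⟩

theorem conicCombinations_eq_image (β : T → E) (J : Finset T) :
    conicCombinations β J = Fintype.linearCombination ℝ (fun j : J => β j) '' Set.Ici 0 := by
  classical
  ext v
  simp only [conicCombinations, Set.mem_ofPred_eq, Set.mem_image, Set.mem_Ici,
    Fintype.linearCombination_apply]
  constructor
  · rintro ⟨lam, hlam, rfl⟩
    exact ⟨fun j => lam j, fun j => hlam j j.2, J.sum_coe_sort fun t => lam t • β t⟩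
  · rintro ⟨w, hw, rfl⟩
    refine ⟨fun t => if ht : t ∈ J then w ⟨t, ht⟩ else 0,
      fun t ht => by simpa [ht] using hw ⟨t, ht⟩, ?_⟩
    rw [← J.sum_coe_sort]
    exact Finset.sum_congr rfl fun j _ => by simp

theorem isClosed_conicCombinations (β : T → E) (s : Finset T) :
    IsClosed (conicCombinations β s) := by
  have hunion : conicCombinations β s =
      ⋃ J ∈ {J : Finset T | J ⊆ s ∧ LinearIndepOn ℝ β (J : Set T)}, conicCombinations β J := by
    ext v
    simp only [Set.mem_iUnion, Set.mem_ofPred_eq, exists_prop]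
    constructor
    · intro hv
      obtain ⟨J, hJs, hJ, hvJ⟩ := exists_linearIndepOn_of_mem_conicCombinations β hv
      exact ⟨J, ⟨hJs, hJ⟩, hvJ⟩
    · rintro ⟨J, ⟨hJs, -⟩, hvJ⟩
      exact conicCombinations_mono β hJs hvJ
  rw [hunion]
  refine Set.Finite.isClosed_biUnion (s.powerset.finite_toSet.subset fun J hJ => by
    simpa using hJ.1) fun J hJ => ?_
  rw [conicCombinations_eq_image]
  have hinj := hJ.2.linearIndependent.fintypeLinearCombination_injective
  exact (LinearMap.isClosedEmbedding_of_injective (LinearMap.ker_eq_bot.mpr hinj)).isClosedMap _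
    isClosed_Ici

/-- **Farkas' lemma** for finitely generated cones. -/
theorem mem_conicCombinations_of_inner_nonpos [CompleteSpace E] (β : T → E) (s : Finset T) {v : E}
    (h : ∀ d : E, (∀ t ∈ s, ⟪β t, d⟫ ≤ 0) → ⟪v, d⟫ ≤ 0) : v ∈ conicCombinations β s := by
  classical
  by_contra hv
  have hconv : Convex ℝ (conicCombinations β s) := by
    rintro _ ⟨lv, hlv, rfl⟩ _ ⟨lw, hlw, rfl⟩ a b ha hb -
    refine ⟨fun t => a * lv t + b * lw t,
      fun t ht => add_nonneg (mul_nonneg ha (hlv t ht)) (mul_nonneg hb (hlw t ht)), ?_⟩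
    simp only [Finset.smul_sum, ← Finset.sum_add_distrib, add_smul, smul_smul]
  obtain ⟨f, u, hfu, huv⟩ :=
    geometric_hahn_banach_closed_point hconv (isClosed_conicCombinations β s) hv
  set d := (InnerProductSpace.toDual ℝ E).symm f
  have hd : ∀ y, ⟪y, d⟫ = f y := fun y => by
    rw [real_inner_comm]; exact InnerProductSpace.toDual_symm_apply ..
  have hu : 0 < u := by simpa using hfu 0 ⟨0, fun _ _ => le_rfl, by simp⟩
  refine (h d fun t ht => ?_).not_gt (by rw [hd]; linarith)
  rw [hd]
  by_contra! hft
  -- if `f (β t) > 0`, the ray through `β t`, which lies in the cone, reaches the level `f = u`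
  have hray : (u / f (β t)) • β t ∈ conicCombinations β s :=
    ⟨fun t' => if t' = t then u / f (β t) else 0,
      fun t' _ => by dsimp only; split_ifs <;> positivity, by simp [ht]⟩
  have := hfu _ hray
  rw [map_smul, smul_eq_mul, div_mul_cancel₀ _ hft.ne'] at this
  exact this.false

theorem LinearIndepOn.exists_sum_abs_le {β : T → E} {J : Finset T}
    (hJ : LinearIndepOn ℝ β (J : Set T)) :
    ∃ κ, ∀ mu : T → ℝ, ∑ t ∈ J, |mu t| ≤ κ * ‖∑ t ∈ J, mu t • β t‖ := by
  set Φ := Fintype.linearCombination ℝ (fun j : J => β j)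
  obtain ⟨K, -, hK⟩ :=
    Φ.injective_iff_antilipschitz.mp hJ.linearIndependent.fintypeLinearCombination_injective
  refine ⟨J.card * K, fun mu => ?_⟩
  set w : J → ℝ := fun j => mu j
  calc ∑ t ∈ J, |mu t| = ∑ j : J, ‖w j‖ := (J.sum_coe_sort fun t => |mu t|).symm
    _ ≤ ∑ _j : J, ‖w‖ := Finset.sum_le_sum fun j _ => norm_le_pi_norm w j
    _ = J.card * ‖w‖ := by simp
    _ ≤ J.card * (K * ‖Φ w‖) := by gcongr; exact ZeroHomClass.bound_of_antilipschitz Φ hK w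
    _ = J.card * K * ‖∑ t ∈ J, mu t • β t‖ := by
      rw [Fintype.linearCombination_apply, J.sum_coe_sort fun t => mu t • β t, mul_assoc]

theorem exists_sum_abs_le_of_linearIndepOn [Finite T] (β : T → E) :
    ∃ κ, 0 ≤ κ ∧ ∀ J : Finset T, LinearIndepOn ℝ β (J : Set T) →
      ∀ mu : T → ℝ, ∑ t ∈ J, |mu t| ≤ κ * ‖∑ t ∈ J, mu t • β t‖ := by
  have hJ (J : Finset T) : ∃ κ, LinearIndepOn ℝ β (J : Set T) →
      ∀ mu : T → ℝ, ∑ t ∈ J, |mu t| ≤ κ * ‖∑ t ∈ J, mu t • β t‖ := by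
    by_cases h : LinearIndepOn ℝ β (J : Set T)
    · exact h.exists_sum_abs_le.imp fun _ hκ _ => hκ
    · exact ⟨0, fun h' => (h h').elim⟩
  choose κ hκ using hJ
  obtain ⟨K, hK⟩ := (Set.finite_range κ).bddAbove
  refine ⟨max K 0, le_max_right _ _, fun J hJ mu => (hκ J hJ mu).trans ?_⟩
  gcongr
  exact (hK ⟨J, rfl⟩).trans (le_max_left _ _)

/-- The normal cone of a polyhedron is generated by the active constraints. -/
theorem mem_conicCombinations_of_inner_sub_nonpos [CompleteSpace E] [Fintype T]
    (β : T → E) (c : T → ℝ) {p v : E} (hp : ∀ t, ⟪β t, p⟫ ≤ c t)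
    (hv : ∀ y : E, (∀ t, ⟪β t, y⟫ ≤ c t) → ⟪v, y - p⟫ ≤ 0) :
    v ∈ conicCombinations β {t | ⟪β t, p⟫ = c t} := by
  refine mem_conicCombinations_of_inner_nonpos β _ fun d hd => ?_
  have hmem : ∀ᶠ s in nhdsWithin (0 : ℝ) (Set.Ioi 0), ∀ t, ⟪β t, p + s • d⟫ ≤ c t := by
    refine Filter.eventually_all.mpr fun t => ?_
    rcases (hp t).eq_or_lt with hact | hslack
    · filter_upwards [self_mem_nhdsWithin] with s hs
      have := hd t (by simpa using hact)
      rw [inner_add_right, real_inner_smul_right]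
      nlinarith [Set.mem_Ioi.mp hs]
    · have hcont : ContinuousAt (fun s : ℝ => ⟪β t, p + s • d⟫) 0 := by fun_prop
      exact nhdsWithin_le_nhds <|
        (hcont.eventually_lt continuousAt_const (by simpa using hslack)).mono fun s hs => hs.le
  obtain ⟨s, hs, hs0⟩ := (hmem.and self_mem_nhdsWithin).exists
  have := hv _ hs
  rw [add_sub_cancel_left, real_inner_smul_right] at this
  exact nonpos_of_mul_nonpos_right this hs0

/-- **Hoffman's error bound** for a polyhedron. -/
theorem exists_infDist_le_sum_max [CompleteSpace E] [Fintype T] (β : T → E) (c : T → ℝ) :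
    ∃ κ, 0 ≤ κ ∧ ∀ x, infDist x {y | ∀ t, ⟪β t, y⟫ ≤ c t} ≤ κ * ∑ t, max (⟪β t, x⟫ - c t) 0 := by
  obtain ⟨κ, hκ, hbound⟩ := exists_sum_abs_le_of_linearIndepOn β
  refine ⟨κ, hκ, fun x => ?_⟩
  set Q := {y | ∀ t, ⟪β t, y⟫ ≤ c t}
  set R := ∑ t, max (⟪β t, x⟫ - c t) 0
  have hR : 0 ≤ R := Finset.sum_nonneg fun t _ => le_max_right _ _
  rcases Q.eq_empty_or_nonempty with hQ | hQ
  · rw [hQ, infDist_empty]; positivity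
  have hconv : Convex ℝ Q := by
    simp only [Q, Set.ofPred_forall]
    exact convex_iInter fun t => convex_halfSpace_le (innerₛₗ ℝ (β t)).isLinear _
  have hclosed : IsClosed Q := by
    simp only [Q, Set.ofPred_forall]
    exact isClosed_iInter fun t => isClosed_le (by fun_prop) continuous_const
  obtain ⟨p, hpQ, hp⟩ := exists_norm_eq_iInf_of_complete_convex hQ hclosed.isComplete hconv x
  have hvar := (norm_eq_iInf_iff_real_inner_le_zero hconv hpQ).mp hp
  obtain ⟨J, hJA, hJ, mu, hmu, hx⟩ := exists_linearIndepOn_of_mem_conicCombinations β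
    (mem_conicCombinations_of_inner_sub_nonpos β c hpQ hvar)
  have hact : ∀ t ∈ J, ⟪β t, x - p⟫ ≤ R := fun t ht => by
    have : ⟪β t, p⟫ = c t := by simpa using hJA ht
    rw [inner_sub_right, this]
    exact (le_max_left _ _).trans (Finset.single_le_sum
      (f := fun t => max (⟪β t, x⟫ - c t) 0) (fun t _ => le_max_right _ _) (Finset.mem_univ t))
  have hsq : ‖x - p‖ ^ 2 ≤ κ * ‖x - p‖ * R := calc
    ‖x - p‖ ^ 2 = ∑ t ∈ J, mu t * ⟪β t, x - p⟫ := by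
      rw [← real_inner_self_eq_norm_sq]
      nth_rewrite 1 [← hx]
      simp only [sum_inner, real_inner_smul_left]
    _ ≤ ∑ t ∈ J, |mu t| * R := Finset.sum_le_sum fun t ht => by
      rw [abs_of_nonneg (hmu t ht)]; exact mul_le_mul_of_nonneg_left (hact t ht) (hmu t ht)
    _ = (∑ t ∈ J, |mu t|) * R := (Finset.sum_mul ..).symm
    _ ≤ κ * ‖x - p‖ * R := by
      gcongr; simpa [hx] using hbound J hJ mu
  calc infDist x Q ≤ ‖x - p‖ := by rw [← dist_eq_norm]; exact infDist_le_dist_of_mem hpQ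
    _ ≤ κ * R := by
      rcases (norm_nonneg (x - p)).eq_or_lt with h0 | hpos
      · rw [← h0]; positivity
      · nlinarith

end Hoffman

section Polyhedron

variable {E : Type*}

def IsPolyhedron [AddCommGroup E] [Module ℝ E] (P : Set E) : Prop :=
  ∃ (T : Type) (_ : Fintype T) (f : T → Module.Dual ℝ E) (c : T → ℝ), P = {y | ∀ t, f t y ≤ c t}

section Module

variable [AddCommGroup E] [Module ℝ E]

theorem isPolyhedron_setOf_le (f : Module.Dual ℝ E) (c : ℝ) : IsPolyhedron {y | f y ≤ c} :=
  ⟨Unit, inferInstance, fun _ => f, fun _ => c, by simp⟩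

theorem isPolyhedron_setOf_ge (f : Module.Dual ℝ E) (c : ℝ) : IsPolyhedron {y | c ≤ f y} := by
  simpa using isPolyhedron_setOf_le (-f) (-c)

theorem IsPolyhedron.inter {P Q : Set E} (hP : IsPolyhedron P) (hQ : IsPolyhedron Q) :
    IsPolyhedron (P ∩ Q) := by
  obtain ⟨T, _, f, c, rfl⟩ := hP
  obtain ⟨T', _, f', c', rfl⟩ := hQ
  exact ⟨T ⊕ T', inferInstance, Sum.elim f f', Sum.elim c c', by ext; simp [Sum.forall]⟩

theorem isPolyhedron_setOf_eq (f : Module.Dual ℝ E) (c : ℝ) : IsPolyhedron {y | f y = c} := by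
  simpa [← Set.ofPred_and, le_antisymm_iff] using
    (isPolyhedron_setOf_le f c).inter (isPolyhedron_setOf_ge f c)

theorem IsPolyhedron.iInter {ι : Type} [Fintype ι] {P : ι → Set E}
    (hP : ∀ i, IsPolyhedron (P i)) : IsPolyhedron (⋂ i, P i) := by
  choose T hT f c hfc using hP
  exact ⟨Σ i, T i, inferInstance, fun t => f t.1 t.2, fun t => c t.1 t.2, by
    ext; simp [hfc, Sigma.forall]⟩

theorem IsPolyhedron.convex {P : Set E} (hP : IsPolyhedron P) : Convex ℝ P := by
  obtain ⟨T, _, f, c, rfl⟩ := hP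
  simp only [Set.ofPred_forall]
  exact convex_iInter fun t => convex_halfSpace_le (f t).isLinear _

end Module

variable [NormedAddCommGroup E] [InnerProductSpace ℝ E] [FiniteDimensional ℝ E]

theorem IsPolyhedron.exists_infDist_le {P : Set E} (hP : IsPolyhedron P) {K : Type*} [Fintype K]
    (Φ : K → Module.Dual ℝ E) (z : K → ℝ) :
    ∃ κ, 0 ≤ κ ∧ ∀ x ∈ P, infDist x {y ∈ P | ∀ k, Φ k y = z k} ≤ κ * ∑ k, |Φ k x - z k| := by
  obtain ⟨T, _, f, c, rfl⟩ := hP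
  -- each equation `Φ k y = z k` becomes the two inequalities `± Φ k y ≤ ± z k`
  set φ : T ⊕ K ⊕ K → Module.Dual ℝ E := Sum.elim f (Sum.elim Φ (-Φ))
  set b : T ⊕ K ⊕ K → ℝ := Sum.elim c (Sum.elim z (-z))
  set β := fun i => (InnerProductSpace.toDual ℝ E).symm (LinearMap.toContinuousLinearMap (φ i))
  have hβ : ∀ i y, ⟪β i, y⟫ = φ i y := fun i y => InnerProductSpace.toDual_symm_apply ..
  obtain ⟨κ, hκ, hbound⟩ := exists_infDist_le_sum_max β b
  refine ⟨κ, hκ, fun x hx => ?_⟩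
  have hset : {y ∈ {y | ∀ t, f t y ≤ c t} | ∀ k, Φ k y = z k} = {y | ∀ i, ⟪β i, y⟫ ≤ b i} := by
    ext y
    simp [hβ, φ, b, Sum.forall, le_antisymm_iff, forall_and, and_comm]
  have hres : ∑ i, max (⟪β i, x⟫ - b i) 0 = ∑ k, |Φ k x - z k| := by
    simp only [hβ, Fintype.sum_sum_type, φ, b, Sum.elim_inl, Sum.elim_inr]
    rw [Finset.sum_eq_zero fun t _ => max_eq_right (sub_nonpos.mpr (hx t)), zero_add,
      ← Finset.sum_add_distrib]
    refine Finset.sum_congr rfl fun k _ => ?_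
    simp only [LinearMap.neg_apply, Pi.neg_apply, neg_sub_neg, ← neg_sub (Φ k x)]
    exact max_zero_add_max_neg_zero_eq_abs_self _
  rw [hset, ← hres]
  exact hbound x

end Polyhedron

namespace Matrix.IsHermitian

variable {ι : Type*} [Fintype ι] [DecidableEq ι] {X : Matrix ι ι ℝ}

theorem toEuclideanLin_eigenvectorBasis (hX : X.IsHermitian) (i : ι) :
    X.toEuclideanLin (hX.eigenvectorBasis i) = hX.eigenvalues i • hX.eigenvectorBasis i := by
  ext j
  simpa using congrFun (hX.mulVec_eigenvectorBasis i) j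

theorem inner_toEuclideanLin_eq_sum (hX : X.IsHermitian) (w : EuclideanSpace ℝ ι) :
    ⟪w, X.toEuclideanLin w⟫ = ∑ j, ⟪hX.eigenvectorBasis j, w⟫ ^ 2 * hX.eigenvalues j := by
  rw [← hX.eigenvectorBasis.sum_inner_mul_inner]
  refine Finset.sum_congr rfl fun j _ => ?_
  rw [← (isSymmetric_toEuclideanLin_iff.mpr hX) _ w, toEuclideanLin_eigenvectorBasis,
    real_inner_smul_left, real_inner_comm w]
  ring

theorem inner_toEuclideanLin_mem (hX : X.IsHermitian) {s : Set ℝ} (hs : Convex ℝ s)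
    (hXs : ∀ j, hX.eigenvalues j ∈ s) {w : EuclideanSpace ℝ ι} (hw : ‖w‖ = 1) :
    ⟪w, X.toEuclideanLin w⟫ ∈ s := by
  rw [hX.inner_toEuclideanLin_eq_sum]
  exact hs.sum_mem (fun j _ => sq_nonneg _)
    (by rw [hX.eigenvectorBasis.sum_sq_inner_right, hw, one_pow]) fun j _ => hXs j

theorem inner_toEuclideanLin_eigenvectorBasis (hX : X.IsHermitian) (i : ι) :
    ⟪hX.eigenvectorBasis i, X.toEuclideanLin (hX.eigenvectorBasis i)⟫ = hX.eigenvalues i := by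
  rw [toEuclideanLin_eigenvectorBasis, real_inner_smul_right, real_inner_self_eq_norm_sq,
    hX.eigenvectorBasis.orthonormal.1 i, one_pow, mul_one]

/-- **Peierls' inequality**. -/
theorem sum_apply_inner_toEuclideanLin_le (hX : X.IsHermitian)
    (w : OrthonormalBasis ι ℝ (EuclideanSpace ℝ ι)) {s : Set ℝ} {f : ℝ → ℝ} (hf : ConvexOn ℝ s f)
    (hXs : ∀ j, hX.eigenvalues j ∈ s) :
    ∑ i, f ⟪w i, X.toEuclideanLin (w i)⟫ ≤ ∑ j, f (hX.eigenvalues j) := by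
  set v := hX.eigenvectorBasis
  -- the weights `⟪v j, w i⟫ ^ 2` form a doubly stochastic matrix
  calc ∑ i, f ⟪w i, X.toEuclideanLin (w i)⟫
      = ∑ i, f (∑ j, ⟪v j, w i⟫ ^ 2 • hX.eigenvalues j) := by
        simp only [hX.inner_toEuclideanLin_eq_sum, smul_eq_mul, v]
    _ ≤ ∑ i, ∑ j, ⟪v j, w i⟫ ^ 2 * f (hX.eigenvalues j) := Finset.sum_le_sum fun i _ =>
        hf.map_sum_le (fun j _ => sq_nonneg _)
          (by rw [v.sum_sq_inner_right, w.orthonormal.1 i, one_pow]) fun j _ => hXs j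
    _ = ∑ j, f (hX.eigenvalues j) := by
        rw [Finset.sum_comm]
        simp only [← Finset.sum_mul, w.sum_sq_inner_left, v.orthonormal.1, one_pow, one_mul]

theorem sum_eigenvalues_sq (hX : X.IsHermitian) :
    ∑ i, hX.eigenvalues i ^ 2 = ∑ j, ∑ k, X j k ^ 2 := by
  have htr : (X * X).trace = ∑ i, hX.eigenvalues i ^ 2 := by
    conv_lhs => rw [hX.spectral_theorem, ← map_mul, Unitary.conjStarAlgAut_apply, trace_mul_cycle,
      Unitary.coe_star_mul_self, one_mul, diagonal_mul_diagonal, trace_diagonal]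
    simp [sq]
  rw [← htr]
  simp only [trace, diag_apply, mul_apply, sq]
  refine Finset.sum_congr rfl fun j _ => Finset.sum_congr rfl fun k _ => ?_
  rw [← hX.apply k j, star_trivial]

end Matrix.IsHermitian

theorem Matrix.PosSemidef.inner_toEuclideanLin_nonneg {ι : Type*} [Fintype ι] [DecidableEq ι]
    {X : Matrix ι ι ℝ} (hX : X.PosSemidef) (w : EuclideanSpace ℝ ι) :
    0 ≤ ⟪w, X.toEuclideanLin w⟫ := by
  simpa [EuclideanSpace.inner_eq_star_dotProduct, dotProduct_comm] using
    hX.dotProduct_mulVec_nonneg w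

section TraceFunction

variable {ι : Type*} [Fintype ι] [DecidableEq ι] {Y Z : Matrix ι ι ℝ} {s : Set ℝ} {f : ℝ → ℝ}
  {a b : ℝ}

theorem ConvexOn.sum_eigenvalues_smul_add_smul_le (hf : ConvexOn ℝ s f) (hY : Y.IsHermitian)
    (hZ : Z.IsHermitian) (hW : (a • Y + b • Z).IsHermitian) (hYs : ∀ i, hY.eigenvalues i ∈ s)
    (hZs : ∀ i, hZ.eigenvalues i ∈ s) (ha : 0 ≤ a) (hb : 0 ≤ b) (hab : a + b = 1) :
    ∑ i, f (hW.eigenvalues i) ≤ a * ∑ i, f (hY.eigenvalues i) + b * ∑ i, f (hZ.eigenvalues i) := by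
  set w := hW.eigenvectorBasis
  have hunit : ∀ i, ‖w i‖ = 1 := w.orthonormal.1
  -- in the eigenbasis of `a • Y + b • Z`, each eigenvalue is the same combination of the
  -- Rayleigh quotients of `Y` and `Z`
  have hsplit : ∀ i, hW.eigenvalues i =
      a * ⟪w i, Y.toEuclideanLin (w i)⟫ + b * ⟪w i, Z.toEuclideanLin (w i)⟫ := fun i => by
    rw [← hW.inner_toEuclideanLin_eigenvectorBasis, map_add, map_smul, map_smul]
    simp only [LinearMap.add_apply, LinearMap.smul_apply, inner_add_right, real_inner_smul_right, w]
  calc ∑ i, f (hW.eigenvalues i)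
      ≤ ∑ i, (a * f ⟪w i, Y.toEuclideanLin (w i)⟫ + b * f ⟪w i, Z.toEuclideanLin (w i)⟫) :=
        Finset.sum_le_sum fun i _ => by
          rw [hsplit]
          exact hf.2 (hY.inner_toEuclideanLin_mem hf.1 hYs (hunit i))
            (hZ.inner_toEuclideanLin_mem hf.1 hZs (hunit i)) ha hb hab
    _ ≤ a * ∑ i, f (hY.eigenvalues i) + b * ∑ i, f (hZ.eigenvalues i) := by
        rw [Finset.sum_add_distrib, ← Finset.mul_sum, ← Finset.mul_sum]
        exact add_le_add
          (mul_le_mul_of_nonneg_left (hY.sum_apply_inner_toEuclideanLin_le w hf hYs) ha)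
          (mul_le_mul_of_nonneg_left (hZ.sum_apply_inner_toEuclideanLin_le w hf hZs) hb)

theorem StrongConvexOn.sum_eigenvalues_smul_add_smul_le {m : ℝ} (hf : StrongConvexOn s m f)
    (hY : Y.IsHermitian) (hZ : Z.IsHermitian) (hW : (a • Y + b • Z).IsHermitian)
    (hYs : ∀ i, hY.eigenvalues i ∈ s) (hZs : ∀ i, hZ.eigenvalues i ∈ s) (ha : 0 ≤ a) (hb : 0 ≤ b)
    (hab : a + b = 1) :
    ∑ i, f (hW.eigenvalues i) + m / 2 * a * b * ∑ j, ∑ k, (Y j k - Z j k) ^ 2 ≤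
      a * ∑ i, f (hY.eigenvalues i) + b * ∑ i, f (hZ.eigenvalues i) := by
  have hg : ConvexOn ℝ s fun t => f t - m / 2 * t ^ 2 := by
    simpa only [Real.norm_eq_abs, sq_abs] using strongConvexOn_iff_convex.mp hf
  have hconv := hg.sum_eigenvalues_smul_add_smul_le hY hZ hW hYs hZs ha hb hab
  simp only [Finset.sum_sub_distrib, ← Finset.mul_sum, hY.sum_eigenvalues_sq, hZ.sum_eigenvalues_sq,
    hW.sum_eigenvalues_sq] at hconv
  have hquad : a * ∑ j, ∑ k, Y j k ^ 2 + b * ∑ j, ∑ k, Z j k ^ 2 -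
      ∑ j, ∑ k, (a • Y + b • Z) j k ^ 2 = a * b * ∑ j, ∑ k, (Y j k - Z j k) ^ 2 := by
    obtain rfl : b = 1 - a := by linarith
    simp only [Finset.mul_sum, ← Finset.sum_add_distrib, ← Finset.sum_sub_distrib, Matrix.add_apply,
      Matrix.smul_apply, smul_eq_mul]
    exact Finset.sum_congr rfl fun j _ => Finset.sum_congr rfl fun k _ => by ring
  linear_combination hconv - m / 2 * hquad

end TraceFunction

theorem strongConvexOn_of_hasDerivWithinAt2 {D : Set ℝ} (hD : Convex ℝ D) {f f' f'' : ℝ → ℝ}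
    {m : ℝ} (hf : ContinuousOn f D)
    (hf' : ∀ x ∈ interior D, HasDerivWithinAt f (f' x) (interior D) x)
    (hf'' : ∀ x ∈ interior D, HasDerivWithinAt f' (f'' x) (interior D) x)
    (hm : ∀ x ∈ interior D, m ≤ f'' x) : StrongConvexOn D m f := by
  rw [strongConvexOn_iff_convex]
  simp only [Real.norm_eq_abs, sq_abs]
  refine convexOn_of_hasDerivWithinAt2_nonneg hD (f' := fun x => f' x - m * x)
    (f'' := fun x => f'' x - m) (hf.sub (by fun_prop)) (fun x hx => ?_) (fun x hx => ?_)
    fun x hx => sub_nonneg.mpr (hm x hx)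
  · exact ((hf' x hx).fun_sub ((hasDerivAt_pow 2 x).const_mul (m / 2)).hasDerivWithinAt).congr_deriv
      (by ring)
  · simpa using (hf'' x hx).fun_sub ((hasDerivAt_id x).const_mul m).hasDerivWithinAt

theorem strongConvexOn_rpow_neg {p a b : ℝ} (hp : 0 < p) (ha : 0 < a) :
    StrongConvexOn (Set.Icc a b) (p * (p + 1) * b ^ (-p - 2)) fun t => t ^ (-p) := by
  have hpos : ∀ t ∈ interior (Set.Icc a b), 0 < t := fun t ht =>
    ha.trans_le (interior_subset ht).1
  refine strongConvexOn_of_hasDerivWithinAt2 (convex_Icc a b)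
    (f' := fun t => -p * t ^ (-p - 1)) (f'' := fun t => -p * ((-p - 1) * t ^ (-p - 1 - 1)))
    (fun t ht =>
      (Real.continuousAt_rpow_const _ _ (.inl (ha.trans_le ht.1).ne')).continuousWithinAt)
    (fun t ht => (Real.hasDerivAt_rpow_const (.inl (hpos t ht).ne')).hasDerivWithinAt)
    (fun t ht => ((Real.hasDerivAt_rpow_const (.inl (hpos t ht).ne')).const_mul _).hasDerivWithinAt)
    fun t ht => ?_
  rw [interior_Icc] at ht
  have : b ^ (-p - 2) ≤ t ^ (-p - 2) :=
    Real.rpow_le_rpow_of_nonpos (ha.trans ht.1) ht.2.le (by linarith)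
  rw [show -p - 1 - 1 = -p - 2 by ring]
  have hp' : 0 ≤ p * (p + 1) := by positivity
  nlinarith [mul_le_mul_of_nonneg_left this hp']

section Sharpness

variable {E : Type*} [NormedAddCommGroup E] [InnerProductSpace ℝ E]

/-- `(M, θ)`-sharpness of `f` on `P`, with `Ω*` and `f*` written out as minimizers and infimum. -/
def IsSharpOn (f : E → ℝ) (P : Set E) (M θ : ℝ) : Prop :=
  ∀ x ∈ P, infDist x {y ∈ P | f y = sInf (f '' P)} ≤ M * (f x - sInf (f '' P)) ^ θ

variable [FiniteDimensional ℝ E]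

theorem IsPolyhedron.exists_isSharpOn {P : Set E} (hP : IsPolyhedron P) {K : Type*} [Fintype K]
    (Φ : K → Module.Dual ℝ E) {g : E → ℝ} {μ : ℝ} (hμ : 0 < μ) (hbdd : BddBelow (g '' P))
    (hfac : ∀ x ∈ P, ∀ y ∈ P, (∀ k, Φ k x = Φ k y) → g x = g y)
    (hgrowth : ∀ x ∈ P, ∀ y ∈ P,
      μ * ∑ k, (Φ k x - Φ k y) ^ 2 + 2 * g (midpoint ℝ x y) ≤ g x + g y) :
    ∃ M > 0, IsSharpOn g P M (1 / 2) := by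
  set gs := sInf (g '' P)
  have hle : ∀ y ∈ P, gs ≤ g y := fun y hy => csInf_le hbdd (Set.mem_image_of_mem g hy)
  rcases {y ∈ P | g y = gs}.eq_empty_or_nonempty with hempty | ⟨xs, hxs, hxs_min⟩
  -- without a minimizer, `Ω* = ∅` and `infDist x ∅ = 0`
  · refine ⟨1, one_pos, fun x hx => ?_⟩
    rw [hempty, infDist_empty]
    have := hle x hx
    positivity
  have hquad : ∀ x ∈ P, μ * ∑ k, (Φ k x - Φ k xs) ^ 2 ≤ g x - gs := fun x hx => by
    linarith [hgrowth x hx xs hxs, hle _ (hP.convex.midpoint_mem hx hxs)]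
  have hlevel : {y ∈ P | g y = gs} = {y ∈ P | ∀ k, Φ k y = Φ k xs} := by
    ext y
    refine and_congr_right fun hy => ⟨fun hgy k => ?_, fun hΦ => hxs_min ▸ hfac y hy xs hxs hΦ⟩
    have hsum : ∑ k, (Φ k y - Φ k xs) ^ 2 = 0 := le_antisymm
      (by nlinarith [hquad y hy]) (Finset.sum_nonneg fun k _ => sq_nonneg _)
    rw [Finset.sum_eq_zero_iff_of_nonneg fun k _ => sq_nonneg _] at hsum
    exact sub_eq_zero.mp (pow_eq_zero_iff two_ne_zero |>.mp (hsum k (Finset.mem_univ k)))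
  obtain ⟨κ, hκ, hhoffman⟩ := hP.exists_infDist_le Φ fun k => Φ k xs
  refine ⟨κ * √(Fintype.card K / μ) + 1, by positivity, fun x hx => ?_⟩
  have hcs : ∑ k, |Φ k x - Φ k xs| ≤ √(Fintype.card K / μ) * √(g x - gs) := by
    rw [← Real.sqrt_mul (by positivity)]
    refine Real.le_sqrt_of_sq_le ?_
    calc (∑ k, |Φ k x - Φ k xs|) ^ 2 ≤ Fintype.card K * ∑ k, (Φ k x - Φ k xs) ^ 2 := by
          simpa using sq_sum_le_card_mul_sum_sq (s := Finset.univ) (f := fun k => |Φ k x - Φ k xs|)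
      _ ≤ Fintype.card K / μ * (g x - gs) := by
          rw [div_mul_eq_mul_div, le_div_iff₀ hμ, mul_assoc]
          gcongr
          linarith [hquad x hx]
  rw [hlevel, ← Real.sqrt_eq_rpow]
  calc infDist x _ ≤ κ * ∑ k, |Φ k x - Φ k xs| := hhoffman x hx
    _ ≤ κ * (√(Fintype.card K / μ) * √(g x - gs)) := by gcongr
    _ ≤ (κ * √(Fintype.card K / μ) + 1) * √(g x - gs) := by
        rw [← mul_assoc]; nlinarith [Real.sqrt_nonneg (g x - gs)]

end Sharpness

section Fusion

variable {m n : ℕ}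

theorem trace_mpow {X : Matrix (Fin n) (Fin n) ℝ} (hX : X.IsHermitian) (r : ℝ) :
    (mpow X r).trace = ∑ i, hX.eigenvalues i ^ r := by
  rw [mpow, dif_pos hX, trace_mul_cycle, Unitary.coe_star_mul_self, one_mul, trace_diagonal]

theorem isPolyhedron_box_inter_sum_eq (l u : EuclideanSpace ℝ (Fin m)) (N : ℝ) :
    IsPolyhedron {x : EuclideanSpace ℝ (Fin m) | (∀ i, l i ≤ x i ∧ x i ≤ u i) ∧ ∑ i, x i = N} := by
  simp only [Set.ofPred_and, Set.ofPred_forall]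
  refine .inter (.iInter fun i => .inter ?_ ?_) ?_
  · exact isPolyhedron_setOf_ge (EuclideanSpace.proj (𝕜 := ℝ) i).toLinearMap (l i)
  · exact isPolyhedron_setOf_le (EuclideanSpace.proj (𝕜 := ℝ) i).toLinearMap (u i)
  · simpa using isPolyhedron_setOf_eq (∑ i, (EuclideanSpace.proj (𝕜 := ℝ) i).toLinearMap) N

def weightedGram (A : Matrix (Fin m) (Fin n) ℝ) :
    EuclideanSpace ℝ (Fin m) →ₗ[ℝ] Matrix (Fin n) (Fin n) ℝ where
  toFun x := Aᵀ * diagonal (fun i => x i) * A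
  map_add' x y := by simp [← diagonal_add, Matrix.add_mul, Matrix.mul_add]
  map_smul' c x := by
    simp [show (diagonal fun i => c * x i) = c • diagonal (fun i => x i) by simp [← diagonal_smul]]

theorem isHermitian_weightedGram (A : Matrix (Fin m) (Fin n) ℝ) (x : EuclideanSpace ℝ (Fin m)) :
    (weightedGram A x).IsHermitian := by
  simpa [weightedGram, conjTranspose_eq_transpose_of_trivial] using
    isHermitian_conjTranspose_mul_mul A (isHermitian_diagonal (fun i => x i))

theorem posSemidef_weightedGram (A : Matrix (Fin m) (Fin n) ℝ) {x : EuclideanSpace ℝ (Fin m)}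
    (hx : ∀ i, 0 ≤ x i) : (weightedGram A x).PosSemidef := by
  simpa [weightedGram, conjTranspose_eq_transpose_of_trivial] using
    (PosSemidef.diagonal (d := fun i => x i) hx).conjTranspose_mul_mul_same A

theorem trace_weightedGram (A : Matrix (Fin m) (Fin n) ℝ) (x : EuclideanSpace ℝ (Fin m)) :
    (weightedGram A x).trace = ∑ i, x i * (A * Aᵀ) i i := by
  rw [weightedGram, LinearMap.coe_mk, AddHom.coe_mk, trace_mul_cycle]
  simp [trace, mul_comm]

theorem exists_eigenvalues_add_weightedGram_mem_Icc (A : Matrix (Fin m) (Fin n) ℝ)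
    {C : Matrix (Fin n) (Fin n) ℝ} (hC : C.PosDef) (u : EuclideanSpace ℝ (Fin m)) :
    ∃ a b, 0 < a ∧ a ≤ b ∧ ∀ x : EuclideanSpace ℝ (Fin m), (∀ i, 0 ≤ x i) → (∀ i, x i ≤ u i) →
      ∀ i, (hC.1.add (isHermitian_weightedGram A x)).eigenvalues i ∈ Set.Icc a b := by
  obtain ⟨a, ha, haC⟩ : ∃ a > 0, ∀ j, a ≤ hC.1.eigenvalues j := by
    cases isEmpty_or_nonempty (Fin n)
    · exact ⟨1, one_pos, fun j => isEmptyElim j⟩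
    · obtain ⟨j, hj⟩ := Finite.exists_min hC.1.eigenvalues
      exact ⟨_, hC.eigenvalues_pos j, hj⟩
  refine ⟨a, max a (C.trace + ∑ i, u i * (A * Aᵀ) i i), ha, le_max_left _ _,
    fun x hx0 hxu i => ?_⟩
  set hS := hC.1.add (isHermitian_weightedGram A x)
  -- lower bound: `C + Aᵀ diag(x) A ≥ C`; upper bound: an eigenvalue of a positive matrix is at
  -- most its trace
  have hlow : ∀ j, a ≤ hS.eigenvalues j := fun j => by
    rw [← hS.inner_toEuclideanLin_eigenvectorBasis, map_add, LinearMap.add_apply, inner_add_right]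
    exact le_add_of_le_of_nonneg
      (hC.1.inner_toEuclideanLin_mem (convex_Ici a) haC (hS.eigenvectorBasis.orthonormal.1 j))
      ((posSemidef_weightedGram A hx0).inner_toEuclideanLin_nonneg _)
  refine ⟨hlow i, le_max_of_le_right ?_⟩
  have hAA : ∀ i, 0 ≤ (A * Aᵀ) i i := fun i => by
    simpa [mul_apply] using Finset.sum_nonneg fun k (_ : k ∈ Finset.univ) => mul_self_nonneg (A i k)
  calc hS.eigenvalues i ≤ ∑ j, hS.eigenvalues j :=
        Finset.single_le_sum (fun j _ => ha.le.trans (hlow j)) (Finset.mem_univ i)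
    _ = C.trace + ∑ i, x i * (A * Aᵀ) i i := by
        simp [← trace_weightedGram, ← trace_add, hS.trace_eq_sum_eigenvalues]
    _ ≤ C.trace + ∑ i, u i * (A * Aᵀ) i i := by
        gcongr with i
        exacts [hAA i, hxu i]

theorem trace_mpow_neg_midpoint_le {p a b : ℝ} (hp : 0 < p) (ha : 0 < a)
    (A : Matrix (Fin m) (Fin n) ℝ) {C : Matrix (Fin n) (Fin n) ℝ} (hC : C.IsHermitian)
    {x y : EuclideanSpace ℝ (Fin m)}
    (hx : ∀ i, (hC.add (isHermitian_weightedGram A x)).eigenvalues i ∈ Set.Icc a b)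
    (hy : ∀ i, (hC.add (isHermitian_weightedGram A y)).eigenvalues i ∈ Set.Icc a b) :
    p * (p + 1) * b ^ (-p - 2) / 4 *
        ∑ q : Fin n × Fin n, (weightedGram A x q.1 q.2 - weightedGram A y q.1 q.2) ^ 2 +
      2 * (mpow (C + weightedGram A (midpoint ℝ x y)) (-p)).trace ≤
      (mpow (C + weightedGram A x) (-p)).trace + (mpow (C + weightedGram A y) (-p)).trace := by
  have hmid : C + weightedGram A (midpoint ℝ x y) =
      (2⁻¹ : ℝ) • (C + weightedGram A x) + (2⁻¹ : ℝ) • (C + weightedGram A y) := by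
    rw [midpoint_eq_smul_add, map_smul, map_add, invOf_eq_inv]
    module
  have hW := ((hC.add (isHermitian_weightedGram A x)).smul (IsSelfAdjoint.all (2⁻¹ : ℝ))).add
    ((hC.add (isHermitian_weightedGram A y)).smul (IsSelfAdjoint.all (2⁻¹ : ℝ)))
  have := (strongConvexOn_rpow_neg hp ha (b := b)).sum_eigenvalues_smul_add_smul_le _ _ hW hx hy
    (by norm_num) (by norm_num) (by norm_num)
  rw [hmid, trace_mpow hW, trace_mpow (hC.add (isHermitian_weightedGram A x)),
    trace_mpow (hC.add (isHermitian_weightedGram A y)), Fintype.sum_prod_type]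
  simp only [Matrix.add_apply, add_sub_add_left_eq_sub] at this
  linarith

end Fusion

theorem fusion_trace_power_sharp (m n : ℕ) (p : ℝ) (hp : 0 < p)
    (A : Matrix (Fin m) (Fin n) ℝ) (C : Matrix (Fin n) (Fin n) ℝ) (hC : C.PosDef)
    (l u : EuclideanSpace ℝ (Fin m)) (hl : ∀ i, 0 ≤ l i)
    (N : ℝ)
    (P : Set (EuclideanSpace ℝ (Fin m)))
    (hP : P = {x | (∀ i, l i ≤ x i ∧ x i ≤ u i) ∧ ∑ i, x i = N})
    (gF : EuclideanSpace ℝ (Fin m) → ℝ)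
    (hgF : gF = fun x => (mpow (C + Aᵀ * Matrix.diagonal (fun i => x i) * A) (-p)).trace) :
    ∃ M > 0, ∀ x ∈ P,
      Metric.infDist x {y ∈ P | gF y = sInf (gF '' P)} ≤
        M * (gF x - sInf (gF '' P)) ^ ((1 : ℝ) / 2) := by
  obtain ⟨a, b, ha, hab, hspec⟩ := exists_eigenvalues_add_weightedGram_mem_Icc A hC u
  have hspecP : ∀ x ∈ P, ∀ i,
      (hC.1.add (isHermitian_weightedGram A x)).eigenvalues i ∈ Set.Icc a b := by
    rw [hP]
    exact fun x hx => hspec x (fun i => (hl i).trans (hx.1 i).1) fun i => (hx.1 i).2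
  subst hgF
  refine (hP ▸ isPolyhedron_box_inter_sum_eq l u N).exists_isSharpOn
    (fun q : Fin n × Fin n => entryLinearMap ℝ ℝ q.1 q.2 ∘ₗ weightedGram A)
    (μ := p * (p + 1) * b ^ (-p - 2) / 4) (by have := ha.trans_le hab; positivity) ?_ ?_ ?_
  · refine ⟨0, ?_⟩
    rintro _ ⟨x, hx, rfl⟩
    change 0 ≤ (mpow (C + weightedGram A x) (-p)).trace
    rw [trace_mpow (hC.1.add (isHermitian_weightedGram A x))]
    exact Finset.sum_nonneg fun i _ => Real.rpow_nonneg (ha.le.trans (hspecP x hx i).1) _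
  · intro x _ y _ hxy
    change (mpow (C + weightedGram A x) (-p)).trace = (mpow (C + weightedGram A y) (-p)).trace
    congr 3
    ext j k
    exact hxy (j, k)
  · exact fun x hx y hy => trace_mpow_neg_midpoint_le hp ha A hC.1 (hspecP x hx) (hspecP y hy)
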